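/- arXiv:0809.3565 — 2 statements merged into one kernel-verified Lean document; each statement's English description precedes it below -/
import Mathlib

section
/- If G is an Eulerian graph (every inner, i.e. non-terminal, node has even degree) with terminal set T, then for every subset A of T, the quantity β(A) := (1/2)(∑_{t∈A} λ(t) − λ(A)) is an integer, where λ(X) denotes the minimum number of edges leaving a node set whose intersection with T is exactly X. -/
open Finset

/-- In an Eulerian network (every non-terminal node has even degree),
β(A) = (1/2)(∑_{t∈A} λ(t) − λ(A)) is an integer for every A ⊆ T. -/
theorem stmt_0 {V : Type*} [Fintype V] [DecidableEq V]
    (c : V → V → ℕ) (hsym : ∀ x y, c x y = c y x) (hloop : ∀ x, c x x = 0)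
    (T : Finset V)
    (deg : V → ℕ) (hdeg : ∀ v, deg v = ∑ y, c v y)
    (heuler : ∀ v, v ∉ T → Even (deg v))
    (d : Finset V → ℕ) (hd : ∀ X, d X = ∑ x ∈ X, ∑ y ∈ Xᶜ, c x y)
    (lam : Finset V → ℕ)
    (hlam : ∀ A : Finset V, A ⊆ T →
      lam A = sInf {n | ∃ X : Finset V, X ∩ T = A ∧ d X = n})
    (A : Finset V) (hA : A ⊆ T) :
    ∃ k : ℤ, (∑ t ∈ A, (lam {t} : ℤ)) - (lam A : ℤ) = 2 * k := by
  -- the internal double sum is even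
  have hS : ∀ X : Finset V, (∑ x ∈ X, ∑ y ∈ X, (c x y : ZMod 2)) = 0 := by
    intro X
    rw [← Finset.sum_product']
    refine Finset.sum_involution (fun p _ => (p.2, p.1)) ?_ ?_ ?_ ?_
    · intro a ha
      simp only
      rw [hsym a.2 a.1]
      exact CharTwo.add_self_eq_zero _
    · intro a ha h hcon
      apply h
      have h1 : a.2 = a.1 := congrArg Prod.fst hcon
      rw [h1, hloop]
      simp
    · intro a ha
      simp only [Finset.mem_product] at ha ⊢
      exact ⟨ha.2, ha.1⟩
    · intro a ha
      rfl
  -- d X ≡ sum of degrees over X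
  have key : ∀ X : Finset V, ((d X : ZMod 2)) = ∑ v ∈ X ∩ T, ((deg v : ZMod 2)) := by
    intro X
    have h1 : (∑ v ∈ X, (deg v : ZMod 2))
        = (∑ x ∈ X, ∑ y ∈ X, (c x y : ZMod 2)) + (d X : ZMod 2) := by
      rw [hd]
      push_cast
      rw [← Finset.sum_add_distrib]
      refine Finset.sum_congr rfl fun x _ => ?_
      rw [hdeg]
      push_cast
      rw [Finset.sum_add_sum_compl]
    have h2 : ∑ v ∈ X \ T, (deg v : ZMod 2) = 0 := by
      refine Finset.sum_eq_zero fun v hv => ?_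
      obtain ⟨m, hm⟩ := heuler v (Finset.mem_sdiff.mp hv).2
      rw [hm]
      push_cast
      exact CharTwo.add_self_eq_zero _
    have h3 := Finset.sum_inter_add_sum_sdiff X T (fun v => (deg v : ZMod 2))
    rw [h1, hS, zero_add, h2, add_zero] at h3
    exact h3.symm
  -- the infimum is attained
  have hmem : ∀ B : Finset V, B ⊆ T → ∃ X : Finset V, X ∩ T = B ∧ d X = lam B := by
    intro B hB
    have hne : ({n | ∃ X : Finset V, X ∩ T = B ∧ d X = n} : Set ℕ).Nonempty :=
      ⟨d B, B, Finset.inter_eq_left.mpr hB, rfl⟩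
    have := Nat.sInf_mem hne
    rw [hlam B hB]
    exact this
  have hcast : ∀ B : Finset V, B ⊆ T → ((lam B : ZMod 2)) = ∑ t ∈ B, (deg t : ZMod 2) := by
    intro B hB
    obtain ⟨X, hXT, hXd⟩ := hmem B hB
    rw [← hXd, key X, hXT]
  -- conclude via parity
  have hdvd : (2 : ℤ) ∣ (∑ t ∈ A, (lam {t} : ℤ)) - (lam A : ℤ) := by
    rw [show ((2:ℤ)) = ((2:ℕ):ℤ) by norm_num, ← ZMod.intCast_zmod_eq_zero_iff_dvd]
    push_cast
    rw [hcast A hA]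
    rw [sub_eq_zero]
    refine Finset.sum_congr rfl fun t ht => ?_
    have := hcast {t} (Finset.singleton_subset_iff.mpr (hA ht))
    rw [this, Finset.sum_singleton]
  obtain ⟨k, hk⟩ := hdvd
  exact ⟨k, hk⟩
end

section
/- Let ω be values on unordered pairs of a finite set T defined from a graph (T,S) with anticlique clutter 𝒦 satisfying condition (kc) by: ω(u,v)=1 if (u,v)∈S; ω(u,v)=1/2 if the pair {u,v} is contained in exactly one member of 𝒦; ω(u,v)=0 if {u,v} is contained in at least two members of 𝒦. Then ω is a metric on T (i.e., it satisfies the triangle inequality and ω(u,u)=0, with symmetry). -/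
/-!
Under (kc), if a pair `{u, v}` lies in two distinct anticliques `A` and `B`, then every anticlique
containing `v` meets `A ∩ B`, hence contains all of `A ∩ B`, in particular `u`. So `ω u v = 0`
makes `u` lie in every anticlique through `v`, and since `ω` decreases as the set of anticliques
containing a pair grows, `ω u w ≤ ω v w` for every `w`. This settles the triangle inequality
whenever one of the two summands vanishes; otherwise both are at least `1/2` while `ω ≤ 1`.
-/

section

variable {α T : Type*}

theorem existsUnique_or_exists_ne_of_exists {p : α → Prop} (h : ∃ a, p a) :
    (∃! a, p a) ∨ ∃ a b, a ≠ b ∧ p a ∧ p b := by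
  by_cases hu : ∃! a, p a
  · exact Or.inl hu
  · obtain ⟨a, ha⟩ := h
    obtain ⟨b, hb, hba⟩ : ∃ b, p b ∧ b ≠ a := by
      by_contra! hall
      exact hu ⟨a, ha, hall⟩
    exact Or.inr ⟨a, b, hba.symm, ha, hb⟩

/-- Condition (kc). -/
def SatisfiesKc (𝒦 : Set (Set T)) : Prop :=
  ∀ A B C, A ∈ 𝒦 → B ∈ 𝒦 → C ∈ 𝒦 → A ≠ B → A ≠ C → B ≠ C →
    (A ∩ B).Nonempty → (A ∩ C).Nonempty → (B ∩ C).Nonempty →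
    A ∩ B = A ∩ C ∧ A ∩ C = B ∩ C

theorem SatisfiesKc.inter_subset {𝒦 : Set (Set T)} (hkc : SatisfiesKc 𝒦) {A B C : Set T}
    (hA : A ∈ 𝒦) (hB : B ∈ 𝒦) (hC : C ∈ 𝒦) (hAB : A ≠ B) (hABC : (A ∩ B ∩ C).Nonempty) :
    A ∩ B ⊆ C := by
  by_cases hCA : C = A
  · exact hCA ▸ Set.inter_subset_left
  by_cases hCB : C = B
  · exact hCB ▸ Set.inter_subset_right
  obtain ⟨x, ⟨hxA, hxB⟩, hxC⟩ := hABC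
  rw [(hkc A B C hA hB hC hAB (Ne.symm hCA) (Ne.symm hCB)
    ⟨x, hxA, hxB⟩ ⟨x, hxA, hxC⟩ ⟨x, hxB, hxC⟩).1]
  exact Set.inter_subset_right

structure IsAnticliqueWeight (S : T → T → Prop) (𝒦 : Set (Set T)) (ω : T → T → ℚ) : Prop where
  exists_mem_of_not_adj : ∀ u v, ¬ S u v → ∃ A ∈ 𝒦, u ∈ A ∧ v ∈ A
  adj_symm : ∀ u v, S u v → S v u
  weight_self : ∀ u, ω u u = 0
  weight_of_adj : ∀ u v, S u v → ω u v = 1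
  weight_of_existsUnique : ∀ u v, u ≠ v → (∃! A, A ∈ 𝒦 ∧ u ∈ A ∧ v ∈ A) → ω u v = 1/2
  weight_of_two : ∀ u v, u ≠ v →
    (∃ A B, A ∈ 𝒦 ∧ B ∈ 𝒦 ∧ A ≠ B ∧ u ∈ A ∧ v ∈ A ∧ u ∈ B ∧ v ∈ B) → ω u v = 0

namespace IsAnticliqueWeight

variable {S : T → T → Prop} {𝒦 : Set (Set T)} {ω : T → T → ℚ}

theorem weight_of_mem (hω : IsAnticliqueWeight S 𝒦 ω) {u v : T} (huv : u ≠ v) {A : Set T}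
    (hA : A ∈ 𝒦) (hu : u ∈ A) (hv : v ∈ A) : ω u v = 1/2 ∨ ω u v = 0 := by
  rcases existsUnique_or_exists_ne_of_exists (p := fun A => A ∈ 𝒦 ∧ u ∈ A ∧ v ∈ A) ⟨A, hA, hu, hv⟩ with h | ⟨A, B, hAB, hA, hB⟩
  · exact Or.inl (hω.weight_of_existsUnique u v huv h)
  · exact Or.inr (hω.weight_of_two u v huv ⟨A, B, hA.1, hB.1, hAB, hA.2.1, hA.2.2, hB.2⟩)

theorem weight_le_half_of_mem (hω : IsAnticliqueWeight S 𝒦 ω) {u v : T} (huv : u ≠ v)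
    {A : Set T} (hA : A ∈ 𝒦) (hu : u ∈ A) (hv : v ∈ A) : ω u v ≤ 1/2 := by
  rcases hω.weight_of_mem huv hA hu hv with h | h <;> norm_num [h]

theorem weight_trichotomy (hω : IsAnticliqueWeight S 𝒦 ω) (u v : T) :
    ω u v = 0 ∨ ω u v = 1/2 ∨ ω u v = 1 := by
  by_cases huv : u = v
  · exact Or.inl (huv ▸ hω.weight_self u)
  by_cases hS : S u v
  · exact Or.inr (Or.inr (hω.weight_of_adj u v hS))
  obtain ⟨A, hA, hu, hv⟩ := hω.exists_mem_of_not_adj u v hS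
  rcases hω.weight_of_mem huv hA hu hv with h | h
  exacts [Or.inr (Or.inl h), Or.inl h]

theorem weight_nonneg (hω : IsAnticliqueWeight S 𝒦 ω) (u v : T) : 0 ≤ ω u v := by
  rcases hω.weight_trichotomy u v with h | h | h <;> rw [h] <;> norm_num

theorem weight_le_one (hω : IsAnticliqueWeight S 𝒦 ω) (u v : T) : ω u v ≤ 1 := by
  rcases hω.weight_trichotomy u v with h | h | h <;> rw [h] <;> norm_num

theorem weight_symm (hω : IsAnticliqueWeight S 𝒦 ω) (u v : T) : ω u v = ω v u := by
  by_cases huv : u = v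
  · rw [huv]
  by_cases hS : S u v
  · rw [hω.weight_of_adj u v hS, hω.weight_of_adj v u (hω.adj_symm u v hS)]
  obtain ⟨A, hA, hu, hv⟩ := hω.exists_mem_of_not_adj u v hS
  rcases existsUnique_or_exists_ne_of_exists (p := fun A => A ∈ 𝒦 ∧ u ∈ A ∧ v ∈ A) ⟨A, hA, hu, hv⟩ with h | ⟨A, B, hAB, hA, hB⟩
  · have h' : ∃! A, A ∈ 𝒦 ∧ v ∈ A ∧ u ∈ A := by
      simpa only [and_comm (a := v ∈ _)] using h
    rw [hω.weight_of_existsUnique u v huv h, hω.weight_of_existsUnique v u (Ne.symm huv) h']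
  · rw [hω.weight_of_two u v huv ⟨A, B, hA.1, hB.1, hAB, hA.2.1, hA.2.2, hB.2⟩,
      hω.weight_of_two v u (Ne.symm huv) ⟨A, B, hA.1, hB.1, hAB, hA.2.2, hA.2.1, hB.2.2, hB.2.1⟩]

theorem exists_two_of_weight_eq_zero (hω : IsAnticliqueWeight S 𝒦 ω) {u v : T} (huv : u ≠ v)
    (h0 : ω u v = 0) : ∃ A B, A ∈ 𝒦 ∧ B ∈ 𝒦 ∧ A ≠ B ∧ u ∈ A ∧ v ∈ A ∧ u ∈ B ∧ v ∈ B := by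
  have hS : ¬ S u v := fun hS => by simp [hω.weight_of_adj u v hS] at h0
  rcases existsUnique_or_exists_ne_of_exists (hω.exists_mem_of_not_adj u v hS) with
    h | ⟨A, B, hAB, hA, hB⟩
  · simp [hω.weight_of_existsUnique u v huv h] at h0
  · exact ⟨A, B, hA.1, hB.1, hAB, hA.2.1, hA.2.2, hB.2⟩

theorem weight_le_of_forall_mem (hω : IsAnticliqueWeight S 𝒦 ω) {u v w : T} (huw : u ≠ w)
    (hvw : v ≠ w) (hsub : ∀ A ∈ 𝒦, v ∈ A → w ∈ A → u ∈ A) : ω u w ≤ ω v w := by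
  by_cases hS : S v w
  · exact (hω.weight_of_adj v w hS).symm ▸ hω.weight_le_one u w
  rcases existsUnique_or_exists_ne_of_exists (hω.exists_mem_of_not_adj v w hS) with
    h | ⟨A, B, hAB, ⟨hA, hvA, hwA⟩, ⟨hB, hvB, hwB⟩⟩
  · obtain ⟨A, hA, hvA, hwA⟩ := h.exists
    rw [hω.weight_of_existsUnique v w hvw h]
    exact hω.weight_le_half_of_mem huw hA (hsub A hA hvA hwA) hwA
  · rw [hω.weight_of_two u w huw
        ⟨A, B, hA, hB, hAB, hsub A hA hvA hwA, hwA, hsub B hB hvB hwB, hwB⟩,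
      hω.weight_of_two v w hvw ⟨A, B, hA, hB, hAB, hvA, hwA, hvB, hwB⟩]

theorem weight_le_of_weight_eq_zero (hω : IsAnticliqueWeight S 𝒦 ω) (hkc : SatisfiesKc 𝒦)
    {u v : T} (h0 : ω u v = 0) (w : T) : ω u w ≤ ω v w := by
  by_cases huv : u = v
  · rw [huv]
  by_cases hvw : v = w
  · rw [← hvw, h0, hω.weight_self]
  by_cases huw : u = w
  · rw [huw, hω.weight_self]
    exact hω.weight_nonneg v w
  obtain ⟨A, B, hA, hB, hAB, huA, hvA, huB, hvB⟩ := hω.exists_two_of_weight_eq_zero huv h0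
  refine hω.weight_le_of_forall_mem huw hvw fun C hC hvC _ => ?_
  exact (hkc.inter_subset hA hB hC hAB ⟨v, ⟨hvA, hvB⟩, hvC⟩ ⟨huA, huB⟩)

theorem weight_triangle (hω : IsAnticliqueWeight S 𝒦 ω) (hkc : SatisfiesKc 𝒦) (u v w : T) :
    ω u w ≤ ω u v + ω v w := by
  by_cases h₁ : ω u v = 0
  · linarith [hω.weight_le_of_weight_eq_zero hkc h₁ w]
  by_cases h₂ : ω v w = 0
  · have h₂' : ω w v = 0 := hω.weight_symm w v ▸ h₂
    linarith [hω.weight_le_of_weight_eq_zero hkc h₂' u, hω.weight_symm u w, hω.weight_symm u v]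
  have hhalf : ∀ x y, ω x y ≠ 0 → 1/2 ≤ ω x y := fun x y h => by
    rcases hω.weight_trichotomy x y with h' | h' | h'
    · exact absurd h' h
    · exact h'.ge
    · rw [h']; norm_num
  linarith [hhalf u v h₁, hhalf v w h₂, hω.weight_le_one u w]

end IsAnticliqueWeight

end

/-- If 𝒦 is the anticlique clutter of a graph (T,S) satisfying condition (kc),
then ω (1 on edges, 1/2 on pairs covered by exactly one anticlique,
0 on pairs covered by at least two) is a metric on T. -/
theorem stmt_8 {T : Type*} [Fintype T]
    (S : T → T → Prop) (hSsym : ∀ u v, S u v → S v u) (hSirr : ∀ u, ¬ S u u)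
    (𝒦 : Set (Set T))
    (h𝒦 : ∀ A : Set T, A ∈ 𝒦 ↔
      ((∀ u ∈ A, ∀ v ∈ A, ¬ S u v) ∧
       ∀ B : Set T, (∀ u ∈ B, ∀ v ∈ B, ¬ S u v) → A ⊆ B → A = B))
    (hkc : ∀ A B C, A ∈ 𝒦 → B ∈ 𝒦 → C ∈ 𝒦 → A ≠ B → A ≠ C → B ≠ C →
      (A ∩ B).Nonempty → (A ∩ C).Nonempty → (B ∩ C).Nonempty →
      A ∩ B = A ∩ C ∧ A ∩ C = B ∩ C)
    (ω : T → T → ℚ)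
    (hdiag : ∀ u, ω u u = 0)
    (hωS : ∀ u v, S u v → ω u v = 1)
    (hω1 : ∀ u v, u ≠ v →
      (∃! A, A ∈ 𝒦 ∧ u ∈ A ∧ v ∈ A) → ω u v = 1/2)
    (hω0 : ∀ u v, u ≠ v →
      (∃ A B, A ∈ 𝒦 ∧ B ∈ 𝒦 ∧ A ≠ B ∧ u ∈ A ∧ v ∈ A ∧ u ∈ B ∧ v ∈ B) →
      ω u v = 0) :
    (∀ u, ω u u = 0) ∧ (∀ u v, ω u v = ω v u) ∧
      (∀ u v w, ω u w ≤ ω u v + ω v w) := by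
  have hcover : ∀ u v, ¬ S u v → ∃ A ∈ 𝒦, u ∈ A ∧ v ∈ A := by
    intro u v huv
    have hpair : ∀ x ∈ ({u, v} : Set T), ∀ y ∈ ({u, v} : Set T), ¬ S x y := by
      rintro x (rfl | rfl) y (rfl | rfl)
      exacts [hSirr _, huv, fun h => huv (hSsym _ _ h), hSirr _]
    obtain ⟨A, hsub, hAstable, hAmax⟩ :=
      Finite.exists_le_maximal (p := fun B : Set T => ∀ x ∈ B, ∀ y ∈ B, ¬ S x y) hpair
    refine ⟨A, (h𝒦 A).2 ⟨hAstable, fun B hB hAB => (hAmax hB hAB).antisymm' hAB⟩, ?_, ?_⟩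
    exacts [hsub (Set.mem_insert u {v}), hsub (Set.mem_insert_of_mem u rfl)]
  have hω : IsAnticliqueWeight S 𝒦 ω := ⟨hcover, hSsym, hdiag, hωS, hω1, hω0⟩
  exact ⟨hdiag, hω.weight_symm, hω.weight_triangle hkc⟩
end
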